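/- arXiv:1607.00393 — 4 statements merged into one kernel-verified Lean document; each statement's English description precedes it below -/
import Mathlib

section
/- Let F be a continuous symmetric full-support CDF, with sampling distribution X - θ | θ ~ F and posterior θ - X | X ~ F. Suppose Θ₀ ⊆ (-∞, c₀] is Borel measurable with c₀ in the closure of Θ₀. Then the Bayesian test that rejects iff Pr(θ ∈ Θ₀ | X) ≤ α has size at least α; i.e., sup over θ ∈ Θ₀ of the rejection probability is ≥ α. -/
open MeasureTheory Set

/-- If `Θ₀ ⊆ (-∞, c₀]` is Borel with `c₀` in the closure of `Θ₀`, the Bayesian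
test that rejects iff `Pr(θ ∈ Θ₀ | X) ≤ α` has size at least `α`:
`sup_{θ ∈ Θ₀} Pr_θ(reject) ≥ α`. -/
theorem bayes_test_subset_halfline_size_ge
    (F : ℝ → ℝ) (hFcont : Continuous F) (hFmono : StrictMono F)
    (hFbot : Filter.Tendsto F Filter.atBot (nhds 0))
    (hFtop : Filter.Tendsto F Filter.atTop (nhds 1))
    (hFsym : ∀ x, F (-x) = 1 - F x)
    (P : ℝ → Measure ℝ) (hP : ∀ θ, IsProbabilityMeasure (P θ))
    (hSampCDF : ∀ θ x, P θ (Set.Iic x) = ENNReal.ofReal (F (x - θ)))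
    (Post : ℝ → Measure ℝ) (hPost : ∀ X, IsProbabilityMeasure (Post X))
    (hPostCDF : ∀ X t, Post X (Set.Iic t) = ENNReal.ofReal (F (t - X)))
    (α c₀ : ℝ) (hα : α ∈ Set.Ioo (0:ℝ) 1)
    (Θ₀ : Set ℝ) (hΘ₀meas : MeasurableSet Θ₀)
    (hΘ₀sub : Θ₀ ⊆ Set.Iic c₀) (hc₀ : c₀ ∈ closure Θ₀) :
    ENNReal.ofReal α ≤ ⨆ θ ∈ Θ₀, P θ {x | Post x Θ₀ ≤ ENNReal.ofReal α} := by
  obtain ⟨hα0, hα1⟩ := hα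
  -- find q with F q = α
  obtain ⟨a, ha⟩ := (hFbot.eventually (gt_mem_nhds hα0)).exists
  obtain ⟨b, hb⟩ := (hFtop.eventually (lt_mem_nhds hα1)).exists
  have hab : a ≤ b := le_of_lt (hFmono.lt_iff_lt.mp (ha.trans hb))
  obtain ⟨q, -, hq⟩ := intermediate_value_Icc hab hFcont.continuousOn
    (⟨le_of_lt ha, le_of_lt hb⟩ : α ∈ Icc (F a) (F b))
  -- F ≤ 1 everywhere
  have hFle1 : ∀ x, F x ≤ 1 := fun x =>
    ge_of_tendsto hFtop (Filter.eventually_atTop.2 ⟨x, fun y hy => hFmono.monotone hy⟩)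
  have hF0 : ∀ x, 0 ≤ F x := fun x =>
    le_of_tendsto hFbot (Filter.eventually_atBot.2 ⟨x, fun y hy => hFmono.monotone hy⟩)
  -- rejection set contains Ici (c₀ - q)
  have hrej : Ici (c₀ - q) ⊆ {x | Post x Θ₀ ≤ ENNReal.ofReal α} := by
    intro x hx
    have h1 : Post x Θ₀ ≤ Post x (Iic c₀) := measure_mono hΘ₀sub
    have h2 : Post x (Iic c₀) = ENNReal.ofReal (F (c₀ - x)) := hPostCDF x c₀
    have h3 : F (c₀ - x) ≤ α := by
      rw [← hq]
      exact hFmono.monotone (by have := mem_Ici.mp hx; linarith)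
    exact le_trans (h1.trans_eq h2) (ENNReal.ofReal_le_ofReal h3)
  -- lower bound for rejection probability
  have hlow : ∀ θ, ENNReal.ofReal (1 - F (c₀ - q - θ)) ≤
      P θ {x | Post x Θ₀ ≤ ENNReal.ofReal α} := by
    intro θ
    have := hP θ
    have hcompl : P θ (Ioi (c₀ - q)) = 1 - ENNReal.ofReal (F (c₀ - q - θ)) := by
      have h := measure_compl (measurableSet_Iic (a := c₀ - q)) (measure_ne_top (P θ) _)
      rw [compl_Iic] at h
      rw [h, hSampCDF θ (c₀ - q), measure_univ]
    calc ENNReal.ofReal (1 - F (c₀ - q - θ))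
        = 1 - ENNReal.ofReal (F (c₀ - q - θ)) := by
          rw [ENNReal.ofReal_sub _ (hF0 _), ENNReal.ofReal_one]
      _ = P θ (Ioi (c₀ - q)) := hcompl.symm
      _ ≤ P θ (Ici (c₀ - q)) := measure_mono Ioi_subset_Ici_self
      _ ≤ _ := measure_mono hrej
  -- the sup is finite
  have hfin : (⨆ θ ∈ Θ₀, P θ {x | Post x Θ₀ ≤ ENNReal.ofReal α}) ≤ 1 := by
    refine iSup_le fun θ => iSup_le fun _ => prob_le_one
  refine ENNReal.le_of_forall_pos_le_add fun ε hε hlt => ?_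
  -- find θ ∈ Θ₀ close to c₀
  have hcontq : ContinuousAt F (-q) := hFcont.continuousAt
  have hFnegq : F (-q) = 1 - α := by rw [hFsym, hq]
  rw [Metric.continuousAt_iff] at hcontq
  obtain ⟨δ, hδpos, hδ⟩ := hcontq ε (by exact_mod_cast hε)
  obtain ⟨θ, hθΘ, hθd⟩ := Metric.mem_closure_iff.mp hc₀ δ hδpos
  have hdist : dist (c₀ - q - θ) (-q) < δ := by
    rw [Real.dist_eq] at hθd ⊢
    have : c₀ - q - θ - -q = c₀ - θ := by ring
    rw [this]
    exact hθd
  have hFval : F (c₀ - q - θ) < 1 - α + ε := by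
    have := hδ hdist
    rw [Real.dist_eq, hFnegq] at this
    linarith [abs_lt.mp this]
  have key : ENNReal.ofReal (α - ε) ≤ ⨆ θ ∈ Θ₀, P θ {x | Post x Θ₀ ≤ ENNReal.ofReal α} := by
    refine le_trans ?_ (le_iSup₂ (f := fun θ _ => P θ {x | Post x Θ₀ ≤ ENNReal.ofReal α}) θ hθΘ)
    refine le_trans (ENNReal.ofReal_le_ofReal ?_) (hlow θ)
    linarith
  calc ENNReal.ofReal α = ENNReal.ofReal ((α - ε) + ε) := by congr 1; ring
    _ ≤ ENNReal.ofReal (α - ε) + ENNReal.ofReal (ε : ℝ) := ENNReal.ofReal_add_le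
    _ ≤ (⨆ θ ∈ Θ₀, P θ {x | Post x Θ₀ ≤ ENNReal.ofReal α}) + ε := by
        exact add_le_add key (by simp)
end

section
/- Under the scalar limit experiment with F having a continuous strictly positive density f, suppose Θ₀ ⊆ (-∞, c₀] is Borel with c₀ ∈ closure(Θ₀), and the set {θ : θ ≤ c₀, θ ∉ Θ₀} has positive Lebesgue measure. Then the Bayesian test's rejection probability when θ = c₀ is strictly greater than α, and hence its size is strictly greater than α. -/
open MeasureTheory Set

private lemma aux_one_sub_ofReal {a : ℝ} (h0 : 0 ≤ a) (h1 : a ≤ 1) :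
    (1 : ENNReal) - ENNReal.ofReal (1 - a) = ENNReal.ofReal a := by
  rw [← ENNReal.ofReal_one, ← ENNReal.ofReal_sub _ (by linarith : (0:ℝ) ≤ 1 - a)]
  norm_num

/-- If `Θ₀ ⊆ (-∞, c₀]` is Borel with `c₀ ∈ closure Θ₀`, and the carved-away set
`{θ : θ ≤ c₀, θ ∉ Θ₀}` has positive Lebesgue measure, then (with a continuous,
strictly positive density `f`) the Bayesian test's rejection probability at
`θ = c₀` is strictly greater than `α`, and its size is strictly greater than `α`. -/
theorem bayes_test_strict_subset_size_gt
    (F f : ℝ → ℝ) (hFcont : Continuous F) (hFmono : StrictMono F)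
    (hFbot : Filter.Tendsto F Filter.atBot (nhds 0))
    (hFtop : Filter.Tendsto F Filter.atTop (nhds 1))
    (hFsym : ∀ x, F (-x) = 1 - F x)
    (hfcont : Continuous f) (hfpos : ∀ t, 0 < f t)
    (hFf : ∀ x, F x = ∫ t in Set.Iic x, f t)
    (P : ℝ → Measure ℝ) (hP : ∀ θ, IsProbabilityMeasure (P θ))
    (hSampCDF : ∀ θ x, P θ (Set.Iic x) = ENNReal.ofReal (F (x - θ)))
    (Post : ℝ → Measure ℝ) (hPost : ∀ X, IsProbabilityMeasure (Post X))
    (hPostCDF : ∀ X t, Post X (Set.Iic t) = ENNReal.ofReal (F (t - X)))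
    (hPostDens : ∀ X (s : Set ℝ), MeasurableSet s →
      Post X s = ∫⁻ t in s, ENNReal.ofReal (f (t - X)))
    (α c₀ : ℝ) (hα : α ∈ Set.Ioo (0:ℝ) 1)
    (Θ₀ : Set ℝ) (hΘ₀meas : MeasurableSet Θ₀)
    (hΘ₀sub : Θ₀ ⊆ Set.Iic c₀) (hc₀ : c₀ ∈ closure Θ₀)
    (hΔ : 0 < volume {θ : ℝ | θ ≤ c₀ ∧ θ ∉ Θ₀}) :
    ENNReal.ofReal α < P c₀ {x | Post x Θ₀ ≤ ENNReal.ofReal α} ∧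
      ENNReal.ofReal α < ⨆ θ ∈ Θ₀, P θ {x | Post x Θ₀ ≤ ENNReal.ofReal α} := by
  obtain ⟨hα0, hα1⟩ := hα
  -- basic bounds on F
  have hFle1 : ∀ x, F x ≤ 1 := fun x =>
    ge_of_tendsto hFtop (Filter.eventually_atTop.2 ⟨x, fun y hy => hFmono.monotone hy⟩)
  have hF0le : ∀ x, 0 ≤ F x := fun x =>
    le_of_tendsto hFbot (Filter.eventually_atBot.2 ⟨x, fun y hy => hFmono.monotone hy⟩)
  have hFpos : ∀ x, 0 < F x := fun x =>
    lt_of_le_of_lt (hF0le (x - 1)) (hFmono (by linarith))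
  -- integrability of f on half-lines
  have hfnn : ∀ t, 0 ≤ f t := fun t => (hfpos t).le
  have hIic : ∀ x : ℝ, IntegrableOn f (Iic x) volume := by
    intro x
    by_contra h
    have h0 := hFf x
    rw [integral_undef h] at h0
    exact (hFpos x).ne' h0
  have hlint_Iic : ∀ x : ℝ,
      ∫⁻ t in Iic x, ENNReal.ofReal (f t) = ENNReal.ofReal (F x) := by
    intro x
    rw [← ofReal_integral_eq_lintegral_ofReal (hIic x)
      (Filter.Eventually.of_forall hfnn), hFf x]
  -- global integrability of f
  have hfint : Integrable f volume := by
    refine ⟨hfcont.aestronglyMeasurable,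
      (hasFiniteIntegral_iff_ofReal (Filter.Eventually.of_forall hfnn)).2 ?_⟩
    set ν := volume.withDensity (fun t => ENNReal.ofReal (f t)) with hν
    have hmono : Monotone (fun n : ℕ => Iic (n : ℝ)) := fun a b hab =>
      Iic_subset_Iic.2 (Nat.cast_le.2 hab)
    have hU : (⋃ n : ℕ, Iic (n : ℝ)) = univ := by
      ext t
      simp only [mem_iUnion, mem_Iic, mem_univ, iff_true]
      exact exists_nat_ge t
    have hle1 : ν univ ≤ 1 := by
      rw [← hU, hmono.measure_iUnion]
      refine iSup_le fun n => ?_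
      rw [hν, withDensity_apply _ measurableSet_Iic, hlint_Iic]
      exact ENNReal.ofReal_le_one.2 (hFle1 _)
    have : ∫⁻ t, ENNReal.ofReal (f t) = ν univ := by
      rw [hν, withDensity_apply _ MeasurableSet.univ, Measure.restrict_univ]
    rw [this]
    exact lt_of_le_of_lt hle1 ENNReal.one_lt_top
  have hfintx : ∀ x : ℝ, Integrable (fun t => f (t - x)) volume := fun x =>
    hfint.comp_sub_right x
  -- the real posterior mass of Θ₀
  set g : ℝ → ℝ := fun x => ∫ t in Θ₀, f (t - x) with hgdef
  have hPostΘ : ∀ x, Post x Θ₀ = ENNReal.ofReal (g x) := by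
    intro x
    rw [hPostDens x Θ₀ hΘ₀meas, ← ofReal_integral_eq_lintegral_ofReal
      ((hfintx x).integrableOn) (Filter.Eventually.of_forall fun t => hfnn _)]
  -- F (c₀ - x) as a set integral
  have hFreal : ∀ x : ℝ, F (c₀ - x) = ∫ t in Iic c₀, f (t - x) := by
    intro x
    have h1 : ENNReal.ofReal (F (c₀ - x))
        = ENNReal.ofReal (∫ t in Iic c₀, f (t - x)) := by
      rw [← hPostCDF x c₀, hPostDens x _ measurableSet_Iic,
        ← ofReal_integral_eq_lintegral_ofReal ((hfintx x).integrableOn)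
          (Filter.Eventually.of_forall fun t => hfnn _)]
    exact (ENNReal.ofReal_eq_ofReal_iff (hFpos _).le
      (integral_nonneg fun t => hfnn _)).1 h1
  -- the gap
  set Δ : Set ℝ := Iic c₀ \ Θ₀ with hΔdef
  have hΔeq : {θ : ℝ | θ ≤ c₀ ∧ θ ∉ Θ₀} = Δ := by
    ext t; simp [hΔdef]
  have hΔmeas : MeasurableSet Δ := measurableSet_Iic.diff hΘ₀meas
  have hgap : ∀ x, g x < F (c₀ - x) := by
    intro x
    have hsplit : ∫ t in Iic c₀, f (t - x) = g x + ∫ t in Δ, f (t - x) := by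
      have h := setIntegral_union (f := fun t => f (t - x)) (μ := volume)
        disjoint_sdiff_right hΔmeas ((hfintx x).integrableOn) ((hfintx x).integrableOn)
      rwa [union_diff_cancel hΘ₀sub] at h
    have hpos : 0 < ∫ t in Δ, f (t - x) := by
      rw [setIntegral_pos_iff_support_of_nonneg_ae
        (Filter.Eventually.of_forall fun t => hfnn _) ((hfintx x).integrableOn)]
      have hs : Function.support (fun t : ℝ => f (t - x)) = univ :=
        eq_univ_of_forall fun t => (hfpos _).ne'
      rw [hs, univ_inter, ← hΔeq]
      exact hΔ
    rw [hFreal x, hsplit]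
    linarith
  -- the quantile q with F q = α
  obtain ⟨a, ha⟩ := (hFbot.eventually_lt_const hα0).exists
  obtain ⟨b, hb⟩ := (hFtop.eventually_const_lt hα1).exists
  have hab : a ≤ b := (hFmono.lt_iff_lt.1 (ha.trans hb)).le
  obtain ⟨q, -, hq⟩ := intermediate_value_Icc hab hFcont.continuousOn ⟨ha.le, hb.le⟩
  set x₀ : ℝ := c₀ - q with hx₀
  have hgx₀ : g x₀ < α := by
    have h := hgap x₀
    rw [show c₀ - x₀ = q by rw [hx₀]; ring, hq] at h
    exact h
  -- continuity of g
  have hgcont : Continuous g := by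
    set S : C(ℝ, C(ℝ, ℝ)) :=
      ContinuousMap.curry ⟨fun p : ℝ × ℝ => p.2 - p.1, by fun_prop⟩ with hS
    have hmp : ∀ x : ℝ, MeasurePreserving (S x) volume volume := fun x =>
      measurePreserving_sub_right volume x
    set fL : Lp ℝ 1 volume := hfint.toL1 f with hfL
    set T : ℝ → Lp ℝ 1 volume :=
      fun x => Lp.compMeasurePreserving (S x) (hmp x) fL with hT
    have hTcont : Continuous T :=
      Continuous.compMeasurePreservingLp continuous_const S.continuous hmp
        (by norm_num)
    have hTae : ∀ x : ℝ, (T x : ℝ → ℝ) =ᵐ[volume] fun t => f (t - x) := by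
      intro x
      have h1 : (T x : ℝ → ℝ) =ᵐ[volume] (fL : ℝ → ℝ) ∘ (S x) :=
        Lp.coeFn_compMeasurePreserving fL (hmp x)
      have h3 : ((fL : ℝ → ℝ) ∘ (S x)) =ᵐ[volume] (f ∘ (S x)) :=
        (hmp x).quasiMeasurePreserving.ae_eq_comp hfint.coeFn_toL1
      exact h1.trans h3
    have hlip : LipschitzWith 1 (fun u : Lp ℝ 1 volume => ∫ t in Θ₀, u t) := by
      apply LipschitzWith.of_dist_le_mul
      intro u v
      rw [NNReal.coe_one, one_mul]
      have hu : Integrable (fun t => u t) volume := L1.integrable_coeFn u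
      have hv : Integrable (fun t => v t) volume := L1.integrable_coeFn v
      have huv : Integrable (fun t => u t - v t) volume := hu.sub hv
      calc dist (∫ t in Θ₀, u t) (∫ t in Θ₀, v t)
          = |∫ t in Θ₀, (u t - v t)| := by
            rw [Real.dist_eq, integral_sub hu.integrableOn hv.integrableOn]
        _ ≤ ∫ t in Θ₀, |u t - v t| := by
            simpa [Real.norm_eq_abs] using
              norm_integral_le_integral_norm (μ := volume.restrict Θ₀)
                (fun t => u t - v t)
        _ ≤ ∫ t, |u t - v t| :=
            integral_mono_measure Measure.restrict_le_self
              (Filter.Eventually.of_forall fun t => abs_nonneg _) huv.abs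
        _ = dist u v := by
            rw [L1.dist_eq_integral_dist]
            exact integral_congr_ae (Filter.Eventually.of_forall fun t => by
              simp [Real.dist_eq])
    have hgT : g = (fun u : Lp ℝ 1 volume => ∫ t in Θ₀, u t) ∘ T := by
      funext x
      simp only [Function.comp_apply, hgdef]
      exact (setIntegral_congr_ae hΘ₀meas ((hTae x).mono fun t ht _ => ht)).symm
    rw [hgT]
    exact hlip.continuous.comp hTcont
  -- a small ball on which g < α
  have hopen : IsOpen {x : ℝ | g x < α} := isOpen_lt hgcont continuous_const
  obtain ⟨δ, hδ0, hball⟩ := Metric.isOpen_iff.1 hopen x₀ hgx₀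
  -- the rejection region contains Ioi (x₀ - δ)
  have hsub : Ioi (x₀ - δ) ⊆ {x | Post x Θ₀ ≤ ENNReal.ofReal α} := by
    intro x hx
    have hx' : x₀ - δ < x := hx
    have hgx : g x ≤ α := by
      rcases lt_or_ge x x₀ with h | h
      · refine le_of_lt (hball ?_)
        rw [Metric.mem_ball, Real.dist_eq, abs_sub_lt_iff]
        constructor <;> linarith
      · have h1 := hgap x
        have h2 : F (c₀ - x) ≤ F (c₀ - x₀) := hFmono.monotone (by linarith)
        rw [show c₀ - x₀ = q by rw [hx₀]; ring, hq] at h2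
        linarith
    simp only [mem_setOf_eq, hPostΘ x]
    exact ENNReal.ofReal_le_ofReal hgx
  -- rejection probabilities of half-lines
  have hPIoi : ∀ θ y : ℝ, P θ (Ioi y) = ENNReal.ofReal (F (θ - y)) := by
    intro θ y
    have := hP θ
    rw [show Ioi y = (Iic y)ᶜ from compl_Iic.symm,
      measure_compl measurableSet_Iic (measure_ne_top _ _), measure_univ,
      hSampCDF θ y, show y - θ = -(θ - y) by ring, hFsym,
      aux_one_sub_ofReal (hF0le _) (hFle1 _)]
  -- conjunct 1
  have hc1 : ENNReal.ofReal α < P c₀ {x | Post x Θ₀ ≤ ENNReal.ofReal α} := by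
    calc ENNReal.ofReal α < ENNReal.ofReal (F (c₀ - (x₀ - δ))) := by
          refine (ENNReal.ofReal_lt_ofReal_iff (hFpos _)).2 ?_
          rw [← hq]
          exact hFmono (by rw [hx₀]; linarith)
      _ = P c₀ (Ioi (x₀ - δ)) := (hPIoi c₀ (x₀ - δ)).symm
      _ ≤ P c₀ {x | Post x Θ₀ ≤ ENNReal.ofReal α} := measure_mono hsub
  refine ⟨hc1, ?_⟩
  -- conjunct 2
  obtain ⟨θ, hθΘ, hθd⟩ := Metric.mem_closure_iff.1 hc₀ (δ / 2) (by linarith)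
  have hθle : θ ≤ c₀ := hΘ₀sub hθΘ
  have hd : c₀ - θ < δ / 2 := by
    have h := hθd
    rw [Real.dist_eq] at h
    exact (le_abs_self _).trans_lt h
  have key : ENNReal.ofReal α < P θ {x | Post x Θ₀ ≤ ENNReal.ofReal α} := by
    calc ENNReal.ofReal α < ENNReal.ofReal (F (θ - (x₀ - δ))) := by
          refine (ENNReal.ofReal_lt_ofReal_iff (hFpos _)).2 ?_
          rw [← hq]
          exact hFmono (by rw [hx₀]; linarith)
      _ = P θ (Ioi (x₀ - δ)) := (hPIoi θ (x₀ - δ)).symm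
      _ ≤ P θ {x | Post x Θ₀ ≤ ENNReal.ofReal α} := measure_mono hsub
  exact lt_of_lt_of_le key
    (le_biSup (fun θ => P θ {x | Post x Θ₀ ≤ ENNReal.ofReal α}) hθΘ)
end

section
/- Let φ be a continuous linear functional on a Banach space, F a continuous symmetric full-support CDF, with φ(X) - φ(θ) | θ ~ F and φ(θ) - φ(X) | X ~ F. For H₀: φ(θ) ≤ c₀, the Bayesian test rejecting iff F(c₀ - φ(X)) ≤ α has rejection probability at most α for every θ with φ(θ) ≤ c₀, and exactly α when φ(θ) = c₀. -/
open MeasureTheory Set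

/-- Banach-space limit experiment: for `H₀ : φ(θ) ≤ c₀`, the Bayesian test
rejecting iff `F (c₀ - φ X) ≤ α` has rejection probability at most `α` for
every `θ` with `φ θ ≤ c₀`, and exactly `α` when `φ θ = c₀`. -/
theorem bayes_test_halfspace_size
    {E : Type*} [NormedAddCommGroup E] [NormedSpace ℝ E] [CompleteSpace E]
    [MeasurableSpace E] [BorelSpace E]
    (φ : E →L[ℝ] ℝ)
    (F : ℝ → ℝ) (hFcont : Continuous F) (hFmono : StrictMono F)
    (hFbot : Filter.Tendsto F Filter.atBot (nhds 0))
    (hFtop : Filter.Tendsto F Filter.atTop (nhds 1))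
    (hFsym : ∀ x, F (-x) = 1 - F x)
    (P : E → Measure E) (hP : ∀ θ, IsProbabilityMeasure (P θ))
    (hSampCDF : ∀ θ t, P θ {x | φ x - φ θ ≤ t} = ENNReal.ofReal (F t))
    (Post : E → Measure E) (hPost : ∀ X, IsProbabilityMeasure (Post X))
    (hPostCDF : ∀ X t, Post X {θ | φ θ - φ X ≤ t} = ENNReal.ofReal (F t))
    (α c₀ : ℝ) (hα : α ∈ Set.Ioo (0:ℝ) 1) :
    (∀ θ : E, φ θ ≤ c₀ → P θ {x | F (c₀ - φ x) ≤ α} ≤ ENNReal.ofReal α) ∧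
      (∀ θ : E, φ θ = c₀ → P θ {x | F (c₀ - φ x) ≤ α} = ENNReal.ofReal α) := by
  -- F is bounded between 0 and 1
  have hF0 : ∀ t, 0 ≤ F t := by
    intro t
    refine le_of_tendsto hFbot ?_
    filter_upwards [Filter.eventually_le_atBot t] with u hu
    exact (hFmono.monotone hu)
  have hF1 : ∀ t, F t ≤ 1 := by
    intro t
    refine ge_of_tendsto hFtop ?_
    filter_upwards [Filter.eventually_ge_atTop t] with u hu
    exact (hFmono.monotone hu)
  -- find q with F q = α
  obtain ⟨a, ha⟩ := (hFbot.eventually_lt_const hα.1).exists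
  obtain ⟨b, hb⟩ := (hFtop.eventually_const_lt hα.2).exists
  have hab : a ≤ b := le_of_lt (hFmono.lt_iff_lt.mp (ha.trans hb))
  obtain ⟨q, -, hq⟩ := intermediate_value_Icc hab hFcont.continuousOn
    ⟨le_of_lt ha, le_of_lt hb⟩
  -- key: measure of {x | s ≤ φ x - φ θ} is ofReal (F (-s))
  have key : ∀ (θ : E) (s : ℝ),
      P θ {x | s ≤ φ x - φ θ} = ENNReal.ofReal (F (-s)) := by
    intro θ s
    haveI := hP θ
    have hmeas : MeasurableSet {x : E | φ x - φ θ < s} := by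
      have : {x : E | φ x - φ θ < s} = φ ⁻¹' (Iio (s + φ θ)) := by
        ext x; simp [sub_lt_iff_lt_add]
      rw [this]
      exact (φ.continuous.measurable) measurableSet_Iio
    -- measure of the open half-line equals ofReal (F s)
    have hlt : P θ {x | φ x - φ θ < s} = ENNReal.ofReal (F s) := by
      refine le_antisymm ?_ ?_
      · calc P θ {x | φ x - φ θ < s} ≤ P θ {x | φ x - φ θ ≤ s} :=
              measure_mono (fun x hx => by simp only [Set.mem_setOf_eq] at hx ⊢; linarith)
          _ = ENNReal.ofReal (F s) := hSampCDF θ s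
      · have htend : Filter.Tendsto (fun ε : ℝ => ENNReal.ofReal (F (s - ε)))
            (nhdsWithin 0 (Set.Ioi 0)) (nhds (ENNReal.ofReal (F s))) := by
          have : Filter.Tendsto (fun ε : ℝ => F (s - ε)) (nhdsWithin 0 (Set.Ioi 0))
              (nhds (F s)) := by
            have h1 : Filter.Tendsto (fun ε : ℝ => s - ε) (nhdsWithin 0 (Set.Ioi 0))
                (nhds s) := by
              have h0 : Filter.Tendsto (fun ε : ℝ => s - ε) (nhds 0) (nhds s) := by
                have := ((continuous_const (y := s)).sub continuous_id).tendsto (0:ℝ)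
                simpa using (show Filter.Tendsto (fun ε : ℝ => s - ε) (nhds 0) (nhds (s - 0)) from this)
              exact h0.mono_left nhdsWithin_le_nhds
            exact (hFcont.tendsto s).comp h1
          exact (ENNReal.continuous_ofReal.tendsto _).comp this
        refine le_of_tendsto htend ?_
        filter_upwards [self_mem_nhdsWithin] with ε (hε : 0 < ε)
        calc ENNReal.ofReal (F (s - ε)) = P θ {x | φ x - φ θ ≤ s - ε} :=
              (hSampCDF θ _).symm
          _ ≤ P θ {x | φ x - φ θ < s} :=
              measure_mono (fun x hx => by simp only [Set.mem_setOf_eq] at hx ⊢; linarith)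
    have hcompl : {x : E | s ≤ φ x - φ θ} = {x : E | φ x - φ θ < s}ᶜ := by
      ext x; simp [not_lt]
    rw [hcompl, measure_compl hmeas (measure_ne_top _ _), hlt, measure_univ,
      ← ENNReal.ofReal_one, ← ENNReal.ofReal_sub 1 (hF0 s), ← hFsym s]
  -- rewrite the rejection region
  have hset : ∀ θ : E, {x : E | F (c₀ - φ x) ≤ α}
      = {x : E | (c₀ - q - φ θ) ≤ φ x - φ θ} := by
    intro θ
    ext x
    simp only [mem_setOf_eq]
    rw [← hq, hFmono.le_iff_le]
    constructor <;> intro h <;> linarith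
  constructor
  · intro θ hθ
    rw [hset θ, key θ _]
    have : F (-(c₀ - q - φ θ)) ≤ α := by
      rw [← hq]
      exact hFmono.monotone (by linarith)
    exact ENNReal.ofReal_le_ofReal this
  · intro θ hθ
    rw [hset θ, key θ _]
    congr 1
    rw [show -(c₀ - q - φ θ) = q by rw [hθ]; ring, hq]
end

section
/- In the Banach-space limit experiment, suppose Θ₀ ⊆ {θ : φ(θ) ≤ c₀} is measurable and c₀ ∈ φ(closure(Θ₀)). Then the Bayesian test rejecting H₀: θ ∈ Θ₀ iff Pr(θ ∈ Θ₀ | X) ≤ α has size at least α. -/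
open MeasureTheory Set

/-- Banach-space limit experiment: if `Θ₀ ⊆ {θ : φ θ ≤ c₀}` is measurable and
`c₀ ∈ φ(closure Θ₀)`, then the Bayesian test rejecting `H₀ : θ ∈ Θ₀` iff
`Pr(θ ∈ Θ₀ | X) ≤ α` has size at least `α`. -/
theorem bayes_test_subset_halfspace_size_ge
    {E : Type*} [NormedAddCommGroup E] [NormedSpace ℝ E] [CompleteSpace E]
    [MeasurableSpace E] [BorelSpace E]
    (φ : E →L[ℝ] ℝ)
    (F : ℝ → ℝ) (hFcont : Continuous F) (hFmono : StrictMono F)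
    (hFbot : Filter.Tendsto F Filter.atBot (nhds 0))
    (hFtop : Filter.Tendsto F Filter.atTop (nhds 1))
    (hFsym : ∀ x, F (-x) = 1 - F x)
    (P : E → Measure E) (hP : ∀ θ, IsProbabilityMeasure (P θ))
    (hSampCDF : ∀ θ t, P θ {x | φ x - φ θ ≤ t} = ENNReal.ofReal (F t))
    (Post : E → Measure E) (hPost : ∀ X, IsProbabilityMeasure (Post X))
    (hPostCDF : ∀ X t, Post X {θ | φ θ - φ X ≤ t} = ENNReal.ofReal (F t))
    (α c₀ : ℝ) (hα : α ∈ Set.Ioo (0:ℝ) 1)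
    (Θ₀ : Set E) (hΘ₀meas : MeasurableSet Θ₀)
    (hΘ₀sub : Θ₀ ⊆ {θ | φ θ ≤ c₀}) (hc₀ : c₀ ∈ φ '' closure Θ₀) :
    ENNReal.ofReal α ≤ ⨆ θ ∈ Θ₀, P θ {x | Post x Θ₀ ≤ ENNReal.ofReal α} := by
  obtain ⟨hα0, hα1⟩ := hα
  have hFmono' : Monotone F := hFmono.monotone
  have hF0 : ∀ t, 0 ≤ F t := by
    intro t
    refine le_of_tendsto hFbot ?_
    filter_upwards [Filter.eventually_le_atBot t] with u hu using hFmono' hu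
  have hF1 : ∀ t, F t ≤ 1 := by
    intro t
    refine ge_of_tendsto hFtop ?_
    filter_upwards [Filter.eventually_ge_atTop t] with u hu using hFmono' hu
  -- find s with F s = α
  obtain ⟨a, ha⟩ := (hFbot.eventually_lt_const hα0).exists
  obtain ⟨b, hb⟩ := (hFtop.eventually_const_lt hα1).exists
  have hab : a ≤ b := le_of_lt (hFmono.lt_iff_lt.mp (ha.trans hb))
  obtain ⟨s, _, hs⟩ := intermediate_value_Icc hab hFcont.continuousOn
    (mem_Icc.mpr ⟨ha.le, hb.le⟩)
  set r : ℝ := c₀ - s with hr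
  -- rejection region contains {x | r ≤ φ x}
  have hrej : ∀ x : E, r ≤ φ x → Post x Θ₀ ≤ ENNReal.ofReal α := by
    intro x hx
    have h1 : Post x Θ₀ ≤ Post x {θ | φ θ - φ x ≤ c₀ - φ x} := by
      apply measure_mono
      intro θ hθ
      have := hΘ₀sub hθ
      simpa using sub_le_sub_right this (φ x)
    calc Post x Θ₀ ≤ ENNReal.ofReal (F (c₀ - φ x)) := by rw [← hPostCDF x]; exact h1
      _ ≤ ENNReal.ofReal α := by
          refine ENNReal.ofReal_le_ofReal ?_
          rw [← hs]
          exact hFmono' (by linarith)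
  -- lower bound on rejection probability for each θ ∈ Θ₀
  have hlow : ∀ θ ∈ Θ₀,
      ENNReal.ofReal (1 - F (r - φ θ)) ≤ P θ {x | Post x Θ₀ ≤ ENNReal.ofReal α} := by
    intro θ hθ
    have hmeas : MeasurableSet {x : E | φ x - φ θ ≤ r - φ θ} :=
      measurableSet_le ((φ.continuous.measurable).sub measurable_const) measurable_const
    have hcompl : P θ {x : E | φ x - φ θ ≤ r - φ θ}ᶜ
        = 1 - ENNReal.ofReal (F (r - φ θ)) := by
      haveI := hP θ
      rw [measure_compl hmeas (measure_ne_top _ _), measure_univ, hSampCDF θ (r - φ θ)]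
    calc ENNReal.ofReal (1 - F (r - φ θ))
        = 1 - ENNReal.ofReal (F (r - φ θ)) := by
          rw [ENNReal.ofReal_sub _ (hF0 _), ENNReal.ofReal_one]
      _ = P θ {x : E | φ x - φ θ ≤ r - φ θ}ᶜ := hcompl.symm
      _ ≤ P θ {x | Post x Θ₀ ≤ ENNReal.ofReal α} := by
          apply measure_mono
          intro x hx
          simp only [mem_compl_iff, mem_setOf_eq, not_le] at hx
          exact hrej x (by linarith)
  -- conclude via approximation
  refine ENNReal.le_of_forall_pos_le_add ?_
  intro ε hε _
  obtain ⟨θstar, hθstar, hφθstar⟩ := hc₀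
  have hFns : F (-s) = 1 - α := by rw [hFsym, hs]
  have hev : ∀ᶠ t in nhds (-s), F t < 1 - α + ε := by
    refine (hFcont.tendsto (-s)).eventually_lt_const ?_
    rw [hFns]; exact lt_add_of_pos_right _ (by exact_mod_cast hε)
  have hg : Continuous fun θ : E => r - φ θ := continuous_const.sub φ.continuous
  have hnb : {θ : E | F (r - φ θ) < 1 - α + ε} ∈ nhds θstar := by
    have : (fun θ : E => r - φ θ) θstar = -s := by show r - φ θstar = -s; rw [hφθstar, hr]; ring
    have := (hg.tendsto θstar).eventually (this ▸ hev)
    exact this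
  obtain ⟨θ, hθnb, hθΘ₀⟩ := mem_closure_iff_nhds.mp hθstar _ hnb
  have hθF : F (r - φ θ) < 1 - α + ε := hθnb
  have key : ENNReal.ofReal α ≤ ENNReal.ofReal (1 - F (r - φ θ)) + ε := by
    have h1 : α ≤ (1 - F (r - φ θ)) + ε := by
      have : (ε:ℝ) ≥ 0 := ε.coe_nonneg
      linarith
    calc ENNReal.ofReal α ≤ ENNReal.ofReal ((1 - F (r - φ θ)) + ε) :=
          ENNReal.ofReal_le_ofReal h1
      _ = ENNReal.ofReal (1 - F (r - φ θ)) + ENNReal.ofReal ε := by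
          rw [ENNReal.ofReal_add (by linarith [hF1 (r - φ θ)]) ε.coe_nonneg]
      _ = ENNReal.ofReal (1 - F (r - φ θ)) + ε := by rw [ENNReal.ofReal_coe_nnreal]
  refine key.trans (add_le_add_left ?_ _)
  exact le_trans (hlow θ hθΘ₀) (le_iSup₂ (f := fun θ _ => P θ {x | Post x Θ₀ ≤ ENNReal.ofReal α}) θ hθΘ₀)
end
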